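/- arXiv:2108.00146 — 2 statements merged into one kernel-verified Lean document; each statement's English description precedes it below -/
import Mathlib

section
/- Let f_1,...,f_m ∈ [0,1], 1 ≤ k < m, and Ỹ ⊆ {1,...,m} with |Ỹ| = k. Then the minimum over λ ∈ ℝ of Σ_{j∈Ỹ} max(λ − f_j, 0) + Σ_{j∉Ỹ} max(f_j − λ, 0) equals Σ_{j=1}^k f_[j] − Σ_{j∈Ỹ} f_j, the gap between the sum of the k largest values and the sum of the values indexed by Ỹ. -/
/-!
Let `S` index the `k` largest values. For every `λ`, the objective is at least
`∑_{Y \ S} (λ - f j) + ∑_{S \ Y} (f j - λ)`, and since `|Y \ S| = |S \ Y|` the `λ`s cancel,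
leaving `∑_S f - ∑_Y f`. For `λ` between the `k`-th and `(k+1)`-th largest value every
discarded hinge term vanishes and every kept one is active, so the bound is attained.
-/

/-- The values of `f` sorted in descending order. -/
noncomputable def sortedDesc {m : ℕ} (f : Fin m → ℝ) : List ℝ :=
  (List.ofFn f).mergeSort (· ≥ ·)

/-- The `j`-th largest value among `f 0, ..., f (m-1)` (1-indexed). -/
noncomputable def nthLargest {m : ℕ} (f : Fin m → ℝ) (j : ℕ) : ℝ :=
  (sortedDesc f).getD (j - 1) 0

/-- The sum of the `k` largest values among `f 0, ..., f (m-1)`. -/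
noncomputable def topSum {m : ℕ} (f : Fin m → ℝ) (k : ℕ) : ℝ :=
  ((sortedDesc f).take k).sum

open Finset

lemma sum_le_sum_max_zero_of_subset {ι : Type*} {s t : Finset ι} (hst : s ⊆ t) (g : ι → ℝ) :
    ∑ j ∈ s, g j ≤ ∑ j ∈ t, max (g j) 0 :=
  (sum_le_sum fun _ _ => le_max_left _ _).trans <|
    sum_le_sum_of_subset_of_nonneg hst fun _ _ _ => le_max_right _ _

lemma sum_max_zero_eq_sum_of_subset {ι : Type*} [DecidableEq ι] {s t : Finset ι} (hst : s ⊆ t)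
    {g : ι → ℝ} (hs : ∀ j ∈ s, 0 ≤ g j) (ht : ∀ j ∈ t, j ∉ s → g j ≤ 0) :
    ∑ j ∈ t, max (g j) 0 = ∑ j ∈ s, g j :=
  (sum_subset hst fun j hjt hjs => max_eq_right (ht j hjt hjs)).symm.trans <|
    sum_congr rfl fun j hj => max_eq_left (hs j hj)

lemma exists_threshold {ι : Type*} [Finite ι] {f : ι → ℝ} {S : Finset ι}
    (h : ∀ i ∈ S, ∀ j ∉ S, f j ≤ f i) : ∃ c, (∀ i ∈ S, c ≤ f i) ∧ ∀ j ∉ S, f j ≤ c := by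
  rcases S.eq_empty_or_nonempty with rfl | hS
  · obtain ⟨c, hc⟩ := (Set.finite_range f).bddAbove
    exact ⟨c, by simp, fun j _ => hc (Set.mem_range_self j)⟩
  · obtain ⟨i, hi, hmin⟩ := S.exists_min_image f hS
    exact ⟨f i, hmin, h i hi⟩

lemma sum_sub_sum_eq_sum_sdiff_add_sum_sdiff {ι : Type*} [DecidableEq ι] (f : ι → ℝ)
    {S Y : Finset ι} (h : #S = #Y) (c : ℝ) :
    ∑ j ∈ S, f j - ∑ j ∈ Y, f j = ∑ j ∈ Y \ S, (c - f j) + ∑ j ∈ S \ Y, (f j - c) := by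
  rw [← sum_sdiff_sub_sum_sdiff, sum_sub_distrib, sum_sub_distrib, sum_const, sum_const,
    card_sdiff_comm h]
  ring

def hingeCost {ι : Type*} [Fintype ι] [DecidableEq ι] (f : ι → ℝ) (Y : Finset ι) (lam : ℝ) :
    ℝ :=
  ∑ j ∈ Y, max (lam - f j) 0 + ∑ j ∈ Yᶜ, max (f j - lam) 0

section
variable {ι : Type*} [Fintype ι] [DecidableEq ι] {f : ι → ℝ} {Y : Finset ι}

lemma sum_sdiff_add_sum_sdiff_le_hingeCost (S : Finset ι) (c : ℝ) :
    ∑ j ∈ Y \ S, (c - f j) + ∑ j ∈ S \ Y, (f j - c) ≤ hingeCost f Y c :=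
  add_le_add (sum_le_sum_max_zero_of_subset sdiff_subset _)
    (sum_le_sum_max_zero_of_subset (fun _ hj => mem_compl.2 (mem_sdiff.1 hj).2) _)

lemma hingeCost_eq_of_threshold {S : Finset ι} {c : ℝ} (hS : ∀ i ∈ S, c ≤ f i)
    (hSc : ∀ j ∉ S, f j ≤ c) :
    hingeCost f Y c = ∑ j ∈ Y \ S, (c - f j) + ∑ j ∈ S \ Y, (f j - c) := by
  rw [hingeCost,
    sum_max_zero_eq_sum_of_subset sdiff_subset
      (fun j hj => sub_nonneg.2 (hSc j (mem_sdiff.1 hj).2))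
      (fun j hjY hj => sub_nonpos.2 (hS j (by simpa [hjY] using hj))),
    sum_max_zero_eq_sum_of_subset (fun _ hj => mem_compl.2 (mem_sdiff.1 hj).2)
      (fun j hj => sub_nonneg.2 (hS j (mem_sdiff.1 hj).1))
      (fun j hjY hj =>
        sub_nonpos.2 (hSc j fun hjS => hj (mem_sdiff.2 ⟨hjS, mem_compl.1 hjY⟩)))]

theorem isLeast_range_hingeCost {S : Finset ι} (hcard : #S = #Y)
    (hsep : ∀ i ∈ S, ∀ j ∉ S, f j ≤ f i) :
    IsLeast (Set.range (hingeCost f Y)) (∑ j ∈ S, f j - ∑ j ∈ Y, f j) := by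
  obtain ⟨c, hS, hSc⟩ := exists_threshold hsep
  refine ⟨⟨c, ?_⟩, ?_⟩
  · rw [hingeCost_eq_of_threshold hS hSc, sum_sub_sum_eq_sum_sdiff_add_sum_sdiff f hcard c]
  · rintro _ ⟨lam, rfl⟩
    rw [sum_sub_sum_eq_sum_sdiff_add_sum_sdiff f hcard lam]
    exact sum_sdiff_add_sum_sdiff_le_hingeCost S lam

end

lemma antitone_comp_sort_neg {m : ℕ} (f : Fin m → ℝ) : Antitone (f ∘ Tuple.sort (-f)) :=
  fun _ _ hab => neg_le_neg_iff.1 (Tuple.monotone_sort (-f) hab)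

lemma sortedDesc_eq_ofFn_comp_sort_neg {m : ℕ} (f : Fin m → ℝ) :
    sortedDesc f = List.ofFn (f ∘ Tuple.sort (-f)) :=
  ((List.mergeSort_perm _ _).trans ((Tuple.sort (-f)).ofFn_comp_perm f).symm).eq_of_pairwise'
    (r := (· ≥ ·)) (List.pairwise_mergeSort' (· ≥ ·) _)
    (List.pairwise_ofFn.2 fun _ _ hij => antitone_comp_sort_neg f hij.le)

noncomputable def topIndices {m : ℕ} (f : Fin m → ℝ) (k : ℕ) : Finset (Fin m) :=
  ({i : Fin m | (i : ℕ) < k} : Finset (Fin m)).map (Tuple.sort (-f)).toEmbedding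

lemma topSum_eq_sum_topIndices {m : ℕ} (f : Fin m → ℝ) (k : ℕ) :
    topSum f k = ∑ j ∈ topIndices f k, f j := by
  rw [topSum, sortedDesc_eq_ofFn_comp_sort_neg, List.sum_take_ofFn, topIndices, sum_map]
  rfl

lemma card_topIndices {m : ℕ} (f : Fin m → ℝ) (k : ℕ) : #(topIndices f k) = min m k := by
  rw [topIndices, card_map, Fin.card_filter_val_lt]

lemma le_of_mem_topIndices {m : ℕ} (f : Fin m → ℝ) (k : ℕ) {i j : Fin m}
    (hi : i ∈ topIndices f k) (hj : j ∉ topIndices f k) : f j ≤ f i := by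
  simp only [topIndices, mem_map, mem_filter, mem_univ, true_and, Equiv.coe_toEmbedding] at hi hj
  obtain ⟨a, ha, rfl⟩ := hi
  have hb : a ≤ (Tuple.sort (-f)).symm j := by
    rw [Fin.le_def]
    by_contra! hlt
    exact hj ⟨_, hlt.trans ha, Equiv.apply_symm_apply _ j⟩
  simpa using antitone_comp_sort_neg f hb

theorem stmt9_general {m k : ℕ} (f : Fin m → ℝ) (Y : Finset (Fin m)) (hY : Y.card = k) :
    IsLeast (Set.range fun lam : ℝ =>
        ∑ j ∈ Y, max (lam - f j) 0 + ∑ j ∈ Yᶜ, max (f j - lam) 0)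
      (topSum f k - ∑ j ∈ Y, f j) := by
  have hkm : k ≤ m := hY ▸ (card_le_univ Y).trans_eq (Fintype.card_fin m)
  have hcard : #(topIndices f k) = #Y := by rw [card_topIndices, hY, min_eq_right hkm]
  rw [topSum_eq_sum_topIndices]
  exact isLeast_range_hingeCost hcard fun _ hi _ hj => le_of_mem_topIndices f k hi hj

theorem stmt9 {m k : ℕ} (f : Fin m → ℝ) (hf : ∀ j, f j ∈ Set.Icc (0:ℝ) 1)
    (hk1 : 1 ≤ k) (hkm : k < m) (Y : Finset (Fin m)) (hY : Y.card = k) :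
    IsLeast (Set.range fun lam : ℝ =>
        ∑ j ∈ Y, max (lam - f j) 0 + ∑ j ∈ Yᶜ, max (f j - lam) 0)
      (topSum f k - ∑ j ∈ Y, f j) :=
  stmt9_general f Y hY
end

section
/- The function (f_1,...,f_m) ↦ max_{j∈Y} f_j − f_[k+1], where f_[k+1] is the (k+1)-th largest entry, composed with the positive part, i.e., g(f) = max( max_{j∈Y} f_j − f_[k+1], 0 ), is bounded above by (1/(m−k)) times the sum of the (m−k) largest elements of { max(max_{y∈Y} f_y − f_j, 0) : j = 1,...,m }. -/
namespace List

variable {α : Type*} [LinearOrder α]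

theorem le_of_mem_take_of_le_countP {l : List α} (hl : l.Pairwise (· ≥ ·)) {t : α} {n : ℕ}
    (hn : n ≤ l.countP (t ≤ ·)) {x : α} (hx : x ∈ l.take n) : t ≤ x := by
  by_contra! hxt
  have hsplit := l.take_append_drop n
  have hge : ∀ a ∈ l.take n, ∀ b ∈ l.drop n, b ≤ a := by
    rw [← hsplit, pairwise_append] at hl
    exact hl.2.2
  have hdrop : (l.drop n).countP (t ≤ ·) = 0 :=
    countP_eq_zero.2 fun b hb => by simpa using (hge x hx b hb).trans_lt hxt
  have htake : (l.take n).countP (t ≤ ·) < (l.take n).length :=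
    countP_le_length.lt_of_ne fun h => hxt.not_ge (by simpa using countP_eq_length.1 h x hx)
  have := (length_take_le n l).trans' htake
  rw [← hsplit, countP_append, hdrop] at hn
  omega

theorem length_sub_le_countP_le_getElem {l : List α} (hl : l.Pairwise (· ≥ ·)) {k : ℕ}
    (hk : k < l.length) : l.length - k ≤ l.countP (· ≤ l[k]) := by
  have hdrop : (l.drop k).countP (· ≤ l[k]) = (l.drop k).length := by
    have hcons := drop_eq_getElem_cons hk
    have hsorted : (l.drop k).Pairwise (· ≥ ·) := hl.sublist (drop_sublist k l)
    rw [hcons, pairwise_cons] at hsorted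
    rw [countP_eq_length, hcons]
    simp only [mem_cons, decide_eq_true_eq]
    rintro a (rfl | ha)
    exacts [le_rfl, hsorted.1 a ha]
  have hsub := (drop_sublist k l).countP_le (p := (· ≤ l[k]))
  rw [hdrop, length_drop] at hsub
  exact hsub

end List

lemma sortedDesc_perm {m : ℕ} (f : Fin m → ℝ) : (sortedDesc f).Perm (List.ofFn f) :=
  List.mergeSort_perm _ _

lemma sortedDesc_length {m : ℕ} (f : Fin m → ℝ) : (sortedDesc f).length = m := by
  rw [(sortedDesc_perm f).length_eq, List.length_ofFn]

lemma sortedDesc_pairwise {m : ℕ} (f : Fin m → ℝ) : (sortedDesc f).Pairwise (· ≥ ·) := by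
  refine (List.pairwise_mergeSort (le := fun a b : ℝ => a ≥ b) ?_ ?_ (List.ofFn f)).imp (by simp)
  · intro a b c hab hbc
    simp_all only [decide_eq_true_eq]
    exact hbc.trans hab
  · intro a b
    simpa using le_total b a

lemma nthLargest_succ {m : ℕ} (f : Fin m → ℝ) {k : ℕ} (hk : k < (sortedDesc f).length) :
    nthLargest f (k + 1) = (sortedDesc f)[k] := by
  simp [nthLargest, List.getElem?_eq_getElem hk]

lemma sub_le_countP_le_nthLargest {m : ℕ} (f : Fin m → ℝ) {k : ℕ} (hk : k < m) :
    m - k ≤ (List.ofFn f).countP (· ≤ nthLargest f (k + 1)) := by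
  have hk' : k < (sortedDesc f).length := by rwa [sortedDesc_length]
  rw [← (sortedDesc_perm f).countP_eq, nthLargest_succ f hk']
  simpa [sortedDesc_length] using List.length_sub_le_countP_le_getElem (sortedDesc_pairwise f) hk'

lemma mul_le_topSum_of_le_countP {m : ℕ} (f : Fin m → ℝ) {t : ℝ} {n : ℕ}
    (hn : n ≤ (List.ofFn f).countP (t ≤ ·)) : n * t ≤ topSum f n := by
  rw [← (sortedDesc_perm f).countP_eq] at hn
  have hlen : ((sortedDesc f).take n).length = n :=
    List.length_take_of_le (hn.trans List.countP_le_length)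
  simpa [hlen, topSum] using List.card_nsmul_le_sum _ t
    fun x hx => List.le_of_mem_take_of_le_countP (sortedDesc_pairwise f) hn hx

theorem stmt14_general {m k : ℕ} (f : Fin m → ℝ) (Y : Finset (Fin m)) (hYne : Y.Nonempty)
    (hkm : k < m) :
    max (Y.sup' hYne f - nthLargest f (k + 1)) 0
      ≤ (1 / ((m : ℝ) - k)) * topSum (fun j => max (Y.sup' hYne f - f j) 0) (m - k) := by
  set φ : ℝ → ℝ := fun x => max (Y.sup' hYne f - x) 0
  have hφ : Antitone φ := fun x y hxy => max_le_max (sub_le_sub_left hxy _) le_rfl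
  have hcount : m - k ≤ (List.ofFn (φ ∘ f)).countP (φ (nthLargest f (k + 1)) ≤ ·) := by
    rw [← List.map_ofFn, List.countP_map]
    refine (sub_le_countP_le_nthLargest f hkm).trans (List.countP_mono_left fun x _ hx => ?_)
    simpa using hφ (by simpa using hx)
  have hpos : (0 : ℝ) < m - k := sub_pos.2 (by exact_mod_cast hkm)
  rw [one_div_mul_eq_div, le_div_iff₀ hpos, mul_comm]
  simpa [φ, Function.comp_def, Nat.cast_sub hkm.le] using mul_le_topSum_of_le_countP (φ ∘ f) hcount

theorem stmt14 {m k : ℕ} (f : Fin m → ℝ) (Y : Finset (Fin m)) (hYne : Y.Nonempty)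
    (hk1 : 1 ≤ k) (hkm : k < m) :
    max (Y.sup' hYne f - nthLargest f (k + 1)) 0
      ≤ (1 / ((m : ℝ) - k)) * topSum (fun j => max (Y.sup' hYne f - f j) 0) (m - k) :=
  stmt14_general f Y hYne hkm
end
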